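/- arXiv:1210.4525 — 2 statements merged into one kernel-verified Lean document; each statement's English description precedes it below -/
import Mathlib

section
/- Let G be a finite group, E an invertible G-lattice and C a coflabby G-lattice. Then every short exact sequence of G-lattices 0 → C → N → E → 0 splits. -/
noncomputable section

namespace Paper

open Function

variable {G : Type} [Group G]

/-- The Tate cohomology `Ĥ⁻¹` of a finite group acting on a `ℤ`-module vanishes:
every element killed by the norm map lies in the augmentation submodule. -/
def Hneg1Vanish [Finite G] {M : Type} [AddCommGroup M] [Module ℤ M]
    (ρ : Representation ℤ G M) : Prop :=
  ∀ m : M, (∑ᶠ g : G, ρ g m) = 0 →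
    m ∈ Submodule.span ℤ {x : M | ∃ (g : G) (y : M), x = ρ g y - y}

/-- The Tate cohomology `Ĥ⁰` vanishes: every invariant element is a norm. -/
def Hhat0Vanish [Finite G] {M : Type} [AddCommGroup M] [Module ℤ M]
    (ρ : Representation ℤ G M) : Prop :=
  ∀ m : M, (∀ g : G, ρ g m = m) → ∃ y : M, m = ∑ᶠ g : G, ρ g y

/-- `H¹` vanishes: every inhomogeneous 1-cocycle is a 1-coboundary. -/
def H1Vanish {M : Type} [AddCommGroup M] [Module ℤ M]
    (ρ : Representation ℤ G M) : Prop :=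
  ∀ f : G → M, (∀ g h : G, f (g * h) = ρ g (f h) + f g) →
    ∃ m : M, ∀ g : G, f g = ρ g m - m

/-- A `G`-lattice: a finitely generated `ℤ`-free module with a `G`-action. -/
structure GLat (G : Type) [Group G] : Type 1 where
  carrier : Type
  [ab : AddCommGroup carrier]
  [mod : Module ℤ carrier]
  [free : Module.Free ℤ carrier]
  [fin : Module.Finite ℤ carrier]
  ρ : Representation ℤ G carrier

attribute [instance] GLat.ab GLat.mod GLat.free GLat.fin

attribute [local instance 2000] Prod.instModule

instance : CoeSort (GLat G) Type := ⟨GLat.carrier⟩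

/-- Build a `G`-lattice from a representation on a finite free `ℤ`-module. -/
def ofRep (M : Type) [AddCommGroup M] [Module ℤ M] [Module.Free ℤ M] [Module.Finite ℤ M]
    (ρ : Representation ℤ G M) : GLat G :=
  { carrier := M, ρ := ρ }

namespace GLat

/-- Direct sum of two `G`-lattices. -/
def sum (M N : GLat G) : GLat G where
  carrier := M.carrier × N.carrier
  ab := Prod.instAddCommGroup
  mod := Prod.instModule
  free := Module.Free.prod ℤ M.carrier N.carrier
  fin := Module.Finite.prod
  ρ :=
    { toFun := fun g => (M.ρ g).prodMap (N.ρ g)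
      map_one' := by
        letI : Module ℤ (M.carrier × N.carrier) := Prod.instModule
        refine LinearMap.ext fun x => ?_
        simp
      map_mul' := fun g h => by
        letI : Module ℤ (M.carrier × N.carrier) := Prod.instModule
        refine LinearMap.ext fun x => ?_
        simp }

/-- Equivariant isomorphism of `G`-lattices. -/
def Iso (M N : GLat G) : Prop :=
  ∃ e : M.carrier ≃ₗ[ℤ] N.carrier, ∀ (g : G) (m : M.carrier), e (M.ρ g m) = N.ρ g (e m)

/-- A `ℤ`-linear map of `G`-lattices is equivariant. -/
def IsEquivariant (M N : GLat G) (f : M.carrier →ₗ[ℤ] N.carrier) : Prop :=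
  ∀ (g : G) (m : M.carrier), f (M.ρ g m) = N.ρ g (f m)

/-- A permutation `G`-lattice: it has a `ℤ`-basis permuted by `G`. -/
def IsPermutation (M : GLat G) : Prop :=
  ∃ (ι : Type) (_ : Fintype ι) (b : Module.Basis ι ℤ M.carrier) (σ : G →* Equiv.Perm ι),
    ∀ (g : G) (i : ι), M.ρ g (b i) = b (σ g i)

/-- A stably permutation `G`-lattice. -/
def IsStablyPermutation (M : GLat G) : Prop :=
  ∃ P Q : GLat G, P.IsPermutation ∧ Q.IsPermutation ∧ (M.sum P).Iso Q

/-- An invertible `G`-lattice: a direct summand of a permutation lattice. -/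
def IsInvertible (M : GLat G) : Prop :=
  ∃ N Q : GLat G, Q.IsPermutation ∧ (M.sum N).Iso Q

/-- Flabby: `Ĥ⁻¹(H, M) = 0` for every subgroup `H ≤ G`. -/
def IsFlabby [Finite G] (M : GLat G) : Prop :=
  ∀ H : Subgroup G, Hneg1Vanish (MonoidHom.comp M.ρ H.subtype)

/-- Coflabby: `H¹(H, M) = 0` for every subgroup `H ≤ G`. -/
def IsCoflabby (M : GLat G) : Prop :=
  ∀ H : Subgroup G, H1Vanish (MonoidHom.comp M.ρ H.subtype)

/-- Restriction of a `G`-lattice to a subgroup `H`. -/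
def res (H : Subgroup G) (M : GLat G) : GLat H :=
  { carrier := M.carrier, ρ := MonoidHom.comp M.ρ H.subtype }

end GLat

/-- A flabby resolution `0 → M → P → F → 0` of a `G`-lattice `M`:
`P` is permutation and `F` is flabby. -/
structure FlabbyResolution [Finite G] (M : GLat G) : Type 1 where
  P : GLat G
  F : GLat G
  incl : M.carrier →ₗ[ℤ] P.carrier
  proj : P.carrier →ₗ[ℤ] F.carrier
  equiv_incl : GLat.IsEquivariant M P incl
  equiv_proj : GLat.IsEquivariant P F proj
  inj : Function.Injective incl
  surj : Function.Surjective proj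
  exact : LinearMap.range incl = LinearMap.ker proj
  permP : P.IsPermutation
  flabbyF : F.IsFlabby

/-- The flabby class `[M]^{fl}` is zero: the flabby part of a flabby resolution
is stably permutation. -/
def FlabbyClassZero [Finite G] (M : GLat G) : Prop :=
  ∃ R : FlabbyResolution M, R.F.IsStablyPermutation

/-- The flabby class `[M]^{fl}` is invertible. -/
def FlabbyClassInvertible [Finite G] (M : GLat G) : Prop :=
  ∃ R : FlabbyResolution M, R.F.IsInvertible

/-- The permutation `G`-lattice `ℤ[S]` on a finite `G`-set `S`. -/
def ofMulActionGLat (G : Type) [Group G] (S : Type) [MulAction G S] [Finite S] : GLat G :=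
  letI : Fintype S := Fintype.ofFinite S
  { carrier := S →₀ ℤ
    fin := Module.Finite.equiv (Finsupp.linearEquivFunOnFinite ℤ ℤ S).symm
    ρ :=
      { toFun := fun g => Finsupp.lmapDomain ℤ ℤ (g • ·)
        map_one' := by ext; simp
        map_mul' := fun x y => by ext; simp [mul_smul] } }

/-- The trivial rank-one `G`-lattice `ℤ`. -/
def trivialGLat (G : Type) [Group G] : GLat G :=
  { carrier := ℤ, ρ := (1 : Representation ℤ G ℤ) }


/-! A permutation lattice `ℤ[G/H]` represents `M ↦ M^H`, so lifting an equivariant map out of a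
permutation lattice along `p : N → E` amounts to lifting `H`-invariant elements of `E` to
`H`-invariant elements of `N` for the stabilizers `H`; the obstruction lies in `H¹(H, C)`, which
vanishes because `C` is coflabby. An invertible `E` is a summand of a permutation lattice `Q`, so
the projection `Q → E` lifts to `N`, and restricting that lift to `E` splits `p`. -/

open MulAction

theorem exists_fixed_lift_of_h1Vanish {C N E : Type} [AddCommGroup C] [Module ℤ C]
    [AddCommGroup N] [Module ℤ N] [AddCommGroup E] [Module ℤ E] {ρC : Representation ℤ G C}
    {ρN : Representation ℤ G N} {ρE : Representation ℤ G E} {i : C →ₗ[ℤ] N} {p : N →ₗ[ℤ] E}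
    (hi : ρC.IsIntertwiningMap ρN i)
    (hp : ρN.IsIntertwiningMap ρE p) (hinj : Injective i) (hexact : Exact i p)
    {H : Subgroup G} (hH : H1Vanish (ρC.comp H.subtype)) {n₀ : N}
    (hfix : ∀ h ∈ H, ρE h (p n₀) = p n₀) :
    ∃ n, p n = p n₀ ∧ ∀ h ∈ H, ρN h n = n := by
  have hdiff : ∀ h : H, ∃ c, i c = ρN h n₀ - n₀ := fun h =>
    (hexact _).mp (by rw [map_sub, hp.isIntertwining, hfix h h.2, sub_self])
  choose f hf using hdiff
  have hcocycle : ∀ g h : H, f (g * h) = ρC g (f h) + f g := fun g h => hinj <| by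
    rw [map_add, hi.isIntertwining, hf, hf, hf, Subgroup.coe_mul, map_mul, Module.End.mul_apply,
      map_sub]
    abel
  obtain ⟨m, hm⟩ := hH f hcocycle
  refine ⟨n₀ - i m, by rw [map_sub, hexact.apply_apply_eq_zero, sub_zero], fun h hh => ?_⟩
  have hfh := hf ⟨h, hh⟩
  rw [hm, map_sub] at hfh
  rw [map_sub, ← hi.isIntertwining, sub_eq_sub_iff_sub_eq_sub]
  exact hfh.symm

theorem exists_equivariant_extension {k ι V : Type*} [CommSemiring k] [AddCommMonoid V]
    [Module k V] [MulAction G ι] (ρ : Representation k G V) (v : ι → V)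
    (hv : ∀ j, ∀ g ∈ stabilizer G j, ρ g (v j) = v j) :
    ∃ w : ι → V, (∀ g j, w (g • j) = ρ g (w j)) ∧
      ∀ j, ∃ (g : G) (r : ι), g • r = j ∧ w j = ρ g (v r) := by
  have hwd : ∀ {g g' : G} {j : ι}, g • j = g' • j → ρ g (v j) = ρ g' (v j) := by
    intro g g' j h
    have hstab : g⁻¹ * g' ∈ stabilizer G j := by
      rw [mem_stabilizer_iff, mul_smul, ← h, inv_smul_smul]
    calc ρ g (v j) = ρ g (ρ (g⁻¹ * g') (v j)) := by rw [hv j _ hstab]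
      _ = ρ g' (v j) := by rw [← Module.End.mul_apply, ← map_mul, mul_inv_cancel_left]
  let r : ι → ι := fun j => (Quotient.mk (orbitRel G ι) j).out
  have hr_smul : ∀ (g : G) j, r (g • j) = r j := fun g j =>
    congrArg Quotient.out (Quotient.sound (orbitRel_apply.mpr (mem_orbit j g)))
  have hr : ∀ j, ∃ g : G, g • r j = j := fun j => by
    obtain ⟨g, hg⟩ := orbitRel_apply.mp (Quotient.mk_out (s := orbitRel G ι) j)
    exact ⟨g⁻¹, inv_smul_eq_iff.mpr hg.symm⟩
  choose γ hγ using hr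
  refine ⟨fun j => ρ (γ j) (v (r j)), fun g j => ?_, fun j => ⟨γ j, r j, hγ j, rfl⟩⟩
  show ρ (γ (g • j)) (v (r (g • j))) = ρ g (ρ (γ j) (v (r j)))
  have h := hγ (g • j)
  rw [hr_smul] at h ⊢
  rw [← Module.End.mul_apply, ← map_mul]
  exact hwd (by rw [h, mul_smul, hγ])

theorem exists_isIntertwiningMap_basis_apply {k ι M V : Type*} [CommSemiring k]
    [AddCommMonoid M] [Module k M] [AddCommMonoid V] [Module k V] [MulAction G ι]
    {ρM : Representation k G M} {ρ : Representation k G V} (b : Module.Basis ι k M)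
    (hb : ∀ g j, ρM g (b j) = b (g • j)) {w : ι → V} (hw : ∀ g j, w (g • j) = ρ g (w j)) :
    ∃ s : M →ₗ[k] V, ρM.IsIntertwiningMap ρ s ∧ ∀ j, s (b j) = w j := by
  obtain ⟨s, hs⟩ : ∃ s : M →ₗ[k] V, ∀ j, s (b j) = w j :=
    ⟨Finsupp.linearCombination k w ∘ₗ b.repr.toLinearMap, fun j => by simp⟩
  refine ⟨s, ⟨fun g => LinearMap.congr_fun (?_ : s ∘ₗ ρM g = ρ g ∘ₗ s)⟩, hs⟩
  exact b.ext fun j => by rw [LinearMap.comp_apply, LinearMap.comp_apply, hb, hs, hs, hw]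

namespace GLat

theorem IsPermutation.exists_lift {Q C N E : GLat G} (hQ : Q.IsPermutation)
    (hC : C.IsCoflabby) {i : C →ₗ[ℤ] N} {p : N →ₗ[ℤ] E} (hi : IsEquivariant C N i)
    (hp : IsEquivariant N E p) (hinj : Injective i) (hsurj : Surjective p) (hexact : Exact i p)
    {f : Q →ₗ[ℤ] E} (hf : IsEquivariant Q E f) :
    ∃ s : Q →ₗ[ℤ] N, IsEquivariant Q N s ∧ p ∘ₗ s = f := by
  obtain ⟨ι, _, b, σ, hb⟩ := hQ
  let _ : MulAction G ι := MulAction.compHom ι σ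
  have hlift : ∀ j, ∃ n, p n = f (b j) ∧ ∀ h ∈ stabilizer G j, N.ρ h n = n := fun j => by
    obtain ⟨n₀, hn₀⟩ := hsurj (f (b j))
    rw [← hn₀]
    refine exists_fixed_lift_of_h1Vanish ⟨hi⟩ ⟨hp⟩ hinj hexact (hC _) fun h hh => ?_
    rw [hn₀, ← hf, hb]
    exact congrArg (f ∘ b) (mem_stabilizer_iff.mp hh)
  choose v hvp hvfix using hlift
  obtain ⟨w, hw, hwv⟩ := exists_equivariant_extension N.ρ v hvfix
  obtain ⟨s, hs, hsb⟩ := exists_isIntertwiningMap_basis_apply b hb hw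
  refine ⟨s, hs.isIntertwining, b.ext fun j => ?_⟩
  obtain ⟨g, r, rfl, hwj⟩ := hwv j
  rw [LinearMap.comp_apply, hsb, hwj, hp, hvp, ← hf, hb]
  rfl

end GLat

theorem ses_coflabby_invertible_splits_general (G : Type) [Group G]
    (C N E : GLat G) (hE : E.IsInvertible) (hC : C.IsCoflabby)
    (i : C.carrier →ₗ[ℤ] N.carrier) (p : N.carrier →ₗ[ℤ] E.carrier)
    (hi : GLat.IsEquivariant C N i) (hp : GLat.IsEquivariant N E p)
    (hinj : Function.Injective i) (hsurj : Function.Surjective p)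
    (hexact : LinearMap.range i = LinearMap.ker p) :
    ∃ s : E.carrier →ₗ[ℤ] N.carrier, GLat.IsEquivariant E N s ∧ p.comp s = LinearMap.id := by
  obtain ⟨E', Q, hQ, e, he⟩ := hE
  have hproj : GLat.IsEquivariant Q E (LinearMap.fst ℤ E E' ∘ₗ e.symm.toLinearMap) :=
    fun g q => by
      obtain ⟨x, rfl⟩ := e.surjective q
      show (e.symm (Q.ρ g (e x))).1 = E.ρ g (e.symm (e x)).1
      rw [← he, e.symm_apply_apply, e.symm_apply_apply]
      rfl
  obtain ⟨s, hs, hps⟩ :=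
    hQ.exists_lift hC hi hp hinj hsurj (LinearMap.exact_iff.mpr hexact.symm) hproj
  refine ⟨s ∘ₗ e.toLinearMap ∘ₗ LinearMap.inl ℤ E E', fun g x => ?_, ?_⟩
  · have hinl : ((E.ρ g x, 0) : E × E') = (E.sum E').ρ g (x, 0) :=
      Prod.ext rfl (map_zero (E'.ρ g)).symm
    show s (e (E.ρ g x, 0)) = N.ρ g (s (e (x, 0)))
    rw [hinl]
    exact (congrArg s (he g (x, 0))).trans (hs g _)
  · ext x
    show p (s (e (x, 0))) = x
    exact (LinearMap.congr_fun hps (e (x, 0))).trans (congrArg Prod.fst (e.symm_apply_apply _))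

/-- Every short exact sequence of `G`-lattices `0 → C → N → E → 0`
with `C` coflabby and `E` invertible splits. -/
theorem ses_coflabby_invertible_splits (G : Type) [Group G] [Finite G]
    (C N E : GLat G) (hE : E.IsInvertible) (hC : C.IsCoflabby)
    (i : C.carrier →ₗ[ℤ] N.carrier) (p : N.carrier →ₗ[ℤ] E.carrier)
    (hi : GLat.IsEquivariant C N i) (hp : GLat.IsEquivariant N E p)
    (hinj : Function.Injective i) (hsurj : Function.Surjective p)
    (hexact : LinearMap.range i = LinearMap.ker p) :
    ∃ s : E.carrier →ₗ[ℤ] N.carrier, GLat.IsEquivariant E N s ∧ p.comp s = LinearMap.id :=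
  ses_coflabby_invertible_splits_general G C N E hE hC i p hi hp hinj hsurj hexact
end Paper
end
end

section
/- Let S3 = ⟨σ, τ | σ^3 = τ^2 = 1, τστ^{-1} = σ^{-1}⟩ act on the rank-4 lattice M with Z-basis x1,...,x4 by the action given by the GAP code (4,14,3,3). Then M is not a permutation S3-lattice, but M ⊕ Z ≅ Z[S3/⟨τ⟩] ⊕ Z[S3/⟨σ⟩] as S3-lattices, where Z carries the trivial action; in particular M is stably permutation. -/
noncomputable section

namespace Paper

open Function

variable {G : Type} [Group G]

attribute [local instance 2000] Prod.instModule

section Aux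

open Module

abbrev G3 : Type := Equiv.Perm (Fin 3)
abbrev sg3 : G3 := finRotate 3
abbrev tu3 : G3 := Equiv.swap 0 1
abbrev Q1 : Type := G3 ⧸ Subgroup.zpowers tu3
abbrev Q2 : Type := G3 ⧸ Subgroup.zpowers sg3

lemma six (g : G3) : g = 1 ∨ g = sg3 ∨ g = sg3*sg3 ∨ g = tu3 ∨ g = tu3*sg3 ∨ g = tu3*(sg3*sg3) := by
  revert g; decide

lemma closure_eq_top : Subgroup.closure ({sg3, tu3} : Set G3) = ⊤ := by
  rw [Subgroup.eq_top_iff']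
  intro g
  have hs : sg3 ∈ Subgroup.closure ({sg3, tu3} : Set G3) :=
    Subgroup.subset_closure (Set.mem_insert _ _)
  have ht : tu3 ∈ Subgroup.closure ({sg3, tu3} : Set G3) :=
    Subgroup.subset_closure (Set.mem_insert_of_mem _ rfl)
  rcases six g with rfl|rfl|rfl|rfl|rfl|rfl
  exacts [one_mem _, hs, mul_mem hs hs, ht, mul_mem ht hs, mul_mem ht (mul_mem hs hs)]

def qb : Fin 3 → Q1 := ![QuotientGroup.mk 1, QuotientGroup.mk sg3, QuotientGroup.mk (sg3 * sg3)]
def rb : Fin 2 → Q2 := ![QuotientGroup.mk 1, QuotientGroup.mk tu3]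

lemma mkQ1_eq {a b : G3} (h : a⁻¹ * b = 1 ∨ a⁻¹ * b = tu3) :
    (QuotientGroup.mk a : Q1) = QuotientGroup.mk b := by
  rw [QuotientGroup.eq]
  rcases h with h | h <;> rw [h]
  · exact one_mem _
  · exact Subgroup.mem_zpowers _

lemma mkQ2_eq {a b : G3} (h : a⁻¹ * b = 1 ∨ a⁻¹ * b = sg3 ∨ a⁻¹ * b = sg3 * sg3) :
    (QuotientGroup.mk a : Q2) = QuotientGroup.mk b := by
  rw [QuotientGroup.eq]
  rcases h with h | h | h <;> rw [h]
  · exact one_mem _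
  · exact Subgroup.mem_zpowers _
  · exact mul_mem (Subgroup.mem_zpowers _) (Subgroup.mem_zpowers _)

lemma smul_q0s : sg3 • qb 0 = qb 1 := by
  have h : sg3 • qb 0 = (QuotientGroup.mk (sg3 * 1) : Q1) := rfl
  rw [h]; exact mkQ1_eq (by decide)
lemma smul_q1s : sg3 • qb 1 = qb 2 := by
  have h : sg3 • qb 1 = (QuotientGroup.mk (sg3 * sg3) : Q1) := rfl
  rw [h]; rfl
lemma smul_q2s : sg3 • qb 2 = qb 0 := by
  have h : sg3 • qb 2 = (QuotientGroup.mk (sg3 * (sg3 * sg3)) : Q1) := rfl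
  rw [h]; exact (mkQ1_eq (by decide)).symm
lemma smul_q0t : tu3 • qb 0 = qb 0 := by
  have h : tu3 • qb 0 = (QuotientGroup.mk (tu3 * 1) : Q1) := rfl
  rw [h]; exact (mkQ1_eq (by decide)).symm
lemma smul_q1t : tu3 • qb 1 = qb 2 := by
  have h : tu3 • qb 1 = (QuotientGroup.mk (tu3 * sg3) : Q1) := rfl
  rw [h]; exact (mkQ1_eq (by decide)).symm
lemma smul_q2t : tu3 • qb 2 = qb 1 := by
  have h : tu3 • qb 2 = (QuotientGroup.mk (tu3 * (sg3 * sg3)) : Q1) := rfl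
  rw [h]; exact (mkQ1_eq (by decide)).symm
lemma smul_r0s : sg3 • rb 0 = rb 0 := by
  have h : sg3 • rb 0 = (QuotientGroup.mk (sg3 * 1) : Q2) := rfl
  rw [h]; exact (mkQ2_eq (by decide)).symm
lemma smul_r1s : sg3 • rb 1 = rb 1 := by
  have h : sg3 • rb 1 = (QuotientGroup.mk (sg3 * tu3) : Q2) := rfl
  rw [h]; exact (mkQ2_eq (by decide)).symm
lemma smul_r0t : tu3 • rb 0 = rb 1 := by
  have h : tu3 • rb 0 = (QuotientGroup.mk (tu3 * 1) : Q2) := rfl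
  rw [h]; exact mkQ2_eq (by decide)
lemma smul_r1t : tu3 • rb 1 = rb 0 := by
  have h : tu3 • rb 1 = (QuotientGroup.mk (tu3 * tu3) : Q2) := rfl
  rw [h]; exact (mkQ2_eq (by decide)).symm

lemma zpow_tau_fix : ∀ x ∈ Subgroup.zpowers tu3, x 2 = 2 := by
  intro x hx
  obtain ⟨k, rfl⟩ := Subgroup.mem_zpowers_iff.mp hx
  exact Equiv.Perm.zpow_apply_eq_self_of_apply_eq_self (by decide) k

lemma zpow_sigma_sign : ∀ x ∈ Subgroup.zpowers sg3, Equiv.Perm.sign x = 1 := by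
  intro x hx
  obtain ⟨k, rfl⟩ := Subgroup.mem_zpowers_iff.mp hx
  rw [map_zpow, show Equiv.Perm.sign sg3 = 1 from by decide, one_zpow]

lemma qb_ne01 : qb 0 ≠ qb 1 := by
  intro h
  have h2 := zpow_tau_fix _ ((QuotientGroup.eq).mp
    (show (QuotientGroup.mk 1 : Q1) = QuotientGroup.mk sg3 from h))
  revert h2; decide

lemma qb_ne02 : qb 0 ≠ qb 2 := by
  intro h
  have h2 := zpow_tau_fix _ ((QuotientGroup.eq).mp
    (show (QuotientGroup.mk 1 : Q1) = QuotientGroup.mk (sg3 * sg3) from h))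
  revert h2; decide

lemma qb_ne12 : qb 1 ≠ qb 2 := by
  intro h
  have h2 := zpow_tau_fix _ ((QuotientGroup.eq).mp
    (show (QuotientGroup.mk sg3 : Q1) = QuotientGroup.mk (sg3 * sg3) from h))
  revert h2; decide

lemma rb_ne01 : rb 0 ≠ rb 1 := by
  intro h
  have h2 := zpow_sigma_sign _ ((QuotientGroup.eq).mp
    (show (QuotientGroup.mk 1 : Q2) = QuotientGroup.mk tu3 from h))
  revert h2; decide

lemma qb_exhaust (x : Q1) : x = qb 0 ∨ x = qb 1 ∨ x = qb 2 := by
  obtain ⟨g, rfl⟩ := QuotientGroup.mk_surjective x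
  rcases six g with rfl|rfl|rfl|rfl|rfl|rfl
  · exact Or.inl rfl
  · exact Or.inr (Or.inl rfl)
  · exact Or.inr (Or.inr rfl)
  · exact Or.inl (mkQ1_eq (by decide))
  · exact Or.inr (Or.inr (mkQ1_eq (by decide)))
  · exact Or.inr (Or.inl (mkQ1_eq (by decide)))

lemma rb_exhaust (x : Q2) : x = rb 0 ∨ x = rb 1 := by
  obtain ⟨g, rfl⟩ := QuotientGroup.mk_surjective x
  rcases six g with rfl|rfl|rfl|rfl|rfl|rfl
  · exact Or.inl rfl
  · exact Or.inl (mkQ2_eq (by decide))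
  · exact Or.inl (mkQ2_eq (by decide))
  · exact Or.inr rfl
  · exact Or.inr (mkQ2_eq (by decide))
  · exact Or.inr (mkQ2_eq (by decide))

def Amat : Matrix (Fin 4) (Fin 4) ℤ := !![1, 0, -1, 0; 0, 1, -1, 0; 0, 0, -1, -1; 0, 0, 1, 0]
def Bmat : Matrix (Fin 4) (Fin 4) ℤ := !![0, 1, -1, 0; 1, 0, -1, 0; 0, 0, -1, 0; 0, 0, 1, 1]
def Cmat : Matrix (Fin 5) (Fin 5) ℤ :=
  !![0,0,1,0,1; 0,0,1,1,0; 0,-1,1,0,0; 1,0,-1,0,0; 1,1,1,1,1]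
def Dmat : Matrix (Fin 5) (Fin 5) ℤ :=
  !![-1,-1,1,0,1; -1,-1,0,-1,1; -1,-1,1,-1,1; 1,2,-1,1,-1; 2,1,-1,1,-1]

def e1L : (Fin 4 → ℤ) × ℤ →ₗ[ℤ] (Fin 5 → ℤ) where
  toFun p := Fin.snoc p.1 p.2
  map_add' p q := by
    funext i
    induction i using Fin.lastCases with
    | last => simp [Fin.snoc]
    | cast i => simp
  map_smul' c p := by
    funext i
    induction i using Fin.lastCases with
    | last => simp [Fin.snoc]
    | cast i => simp

def e1R : (Fin 5 → ℤ) →ₗ[ℤ] (Fin 4 → ℤ) × ℤ where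
  toFun w := (fun i => w i.castSucc, w (Fin.last 4))
  map_add' w v := rfl
  map_smul' c w := rfl

lemma e1R_e1L (p : (Fin 4 → ℤ) × ℤ) : e1R (e1L p) = p := by
  show ((fun i : Fin 4 => (Fin.snoc p.1 p.2 : Fin 5 → ℤ) (Fin.castSucc i)),
    (Fin.snoc p.1 p.2 : Fin 5 → ℤ) (Fin.last 4)) = p
  simp [Fin.snoc]

lemma e1L_e1R (w : Fin 5 → ℤ) : e1L (e1R w) = w := by
  show (Fin.snoc (fun i => w (Fin.castSucc i)) (w (Fin.last 4)) : Fin 5 → ℤ) = w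
  funext i
  induction i using Fin.lastCases with
  | last => simp [Fin.snoc]
  | cast i => simp

def DL : (Fin 5 → ℤ) →ₗ[ℤ] (Fin 5 → ℤ) := Matrix.toLin' Dmat
def CL : (Fin 5 → ℤ) →ₗ[ℤ] (Fin 5 → ℤ) := Matrix.toLin' Cmat

lemma DL_CL (w : Fin 5 → ℤ) : DL (CL w) = w := by
  show Matrix.toLin' Dmat (Matrix.toLin' Cmat w) = w
  rw [Matrix.toLin'_apply, Matrix.toLin'_apply, Matrix.mulVec_mulVec,
    show Dmat * Cmat = 1 from by decide, Matrix.one_mulVec]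

lemma CL_DL (w : Fin 5 → ℤ) : CL (DL w) = w := by
  show Matrix.toLin' Cmat (Matrix.toLin' Dmat w) = w
  rw [Matrix.toLin'_apply, Matrix.toLin'_apply, Matrix.mulVec_mulVec,
    show Cmat * Dmat = 1 from by decide, Matrix.one_mulVec]

def TL : (Fin 5 → ℤ) →ₗ[ℤ] (Q1 →₀ ℤ) × (Q2 →₀ ℤ) where
  toFun w := (Finsupp.single (qb 0) (w 0) + Finsupp.single (qb 1) (w 1) + Finsupp.single (qb 2) (w 2),
              Finsupp.single (rb 0) (w 3) + Finsupp.single (rb 1) (w 4))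
  map_add' w v := by
    refine Prod.ext ?_ ?_ <;>
      simp only [Pi.add_apply, Finsupp.single_add, Prod.fst_add, Prod.snd_add] <;> abel
  map_smul' c w := by
    refine Prod.ext ?_ ?_ <;>
      simp only [Pi.smul_apply, Finsupp.smul_single, RingHom.id_apply, Prod.smul_fst,
        Prod.smul_snd, smul_add] <;> abel

def TR : (Q1 →₀ ℤ) × (Q2 →₀ ℤ) →ₗ[ℤ] (Fin 5 → ℤ) where
  toFun p := ![p.1 (qb 0), p.1 (qb 1), p.1 (qb 2), p.2 (rb 0), p.2 (rb 1)]
  map_add' p p' := by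
    funext i
    fin_cases i <;> simp
  map_smul' c p := by
    funext i
    fin_cases i <;> simp

lemma TR_TL (w : Fin 5 → ℤ) : TR (TL w) = w := by
  funext i
  fin_cases i
  · show (Finsupp.single (qb 0) (w 0) + Finsupp.single (qb 1) (w 1) + Finsupp.single (qb 2) (w 2)) (qb 0) = w 0
    rw [Finsupp.add_apply, Finsupp.add_apply, Finsupp.single_eq_same,
      Finsupp.single_eq_of_ne' (Ne.symm qb_ne01), Finsupp.single_eq_of_ne' (Ne.symm qb_ne02)]
    ring
  · show (Finsupp.single (qb 0) (w 0) + Finsupp.single (qb 1) (w 1) + Finsupp.single (qb 2) (w 2)) (qb 1) = w 1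
    rw [Finsupp.add_apply, Finsupp.add_apply, Finsupp.single_eq_same,
      Finsupp.single_eq_of_ne' qb_ne01, Finsupp.single_eq_of_ne' (Ne.symm qb_ne12)]
    ring
  · show (Finsupp.single (qb 0) (w 0) + Finsupp.single (qb 1) (w 1) + Finsupp.single (qb 2) (w 2)) (qb 2) = w 2
    rw [Finsupp.add_apply, Finsupp.add_apply, Finsupp.single_eq_same,
      Finsupp.single_eq_of_ne' qb_ne02, Finsupp.single_eq_of_ne' qb_ne12]
    ring
  · show (Finsupp.single (rb 0) (w 3) + Finsupp.single (rb 1) (w 4)) (rb 0) = w 3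
    rw [Finsupp.add_apply, Finsupp.single_eq_same, Finsupp.single_eq_of_ne' (Ne.symm rb_ne01)]
    ring
  · show (Finsupp.single (rb 0) (w 3) + Finsupp.single (rb 1) (w 4)) (rb 1) = w 4
    rw [Finsupp.add_apply, Finsupp.single_eq_same, Finsupp.single_eq_of_ne' rb_ne01]
    ring

lemma TL_TR (p : (Q1 →₀ ℤ) × (Q2 →₀ ℤ)) : TL (TR p) = p := by
  refine Prod.ext ?_ ?_
  · show Finsupp.single (qb 0) (p.1 (qb 0)) + Finsupp.single (qb 1) (p.1 (qb 1)) +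
      Finsupp.single (qb 2) (p.1 (qb 2)) = p.1
    ext a
    rcases qb_exhaust a with rfl | rfl | rfl
    · rw [Finsupp.add_apply, Finsupp.add_apply, Finsupp.single_eq_same,
        Finsupp.single_eq_of_ne' (Ne.symm qb_ne01), Finsupp.single_eq_of_ne' (Ne.symm qb_ne02)]
      ring
    · rw [Finsupp.add_apply, Finsupp.add_apply, Finsupp.single_eq_same,
        Finsupp.single_eq_of_ne' qb_ne01, Finsupp.single_eq_of_ne' (Ne.symm qb_ne12)]
      ring
    · rw [Finsupp.add_apply, Finsupp.add_apply, Finsupp.single_eq_same,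
        Finsupp.single_eq_of_ne' qb_ne02, Finsupp.single_eq_of_ne' qb_ne12]
      ring
  · show Finsupp.single (rb 0) (p.2 (rb 0)) + Finsupp.single (rb 1) (p.2 (rb 1)) = p.2
    ext a
    rcases rb_exhaust a with rfl | rfl
    · rw [Finsupp.add_apply, Finsupp.single_eq_same, Finsupp.single_eq_of_ne' (Ne.symm rb_ne01)]
      ring
    · rw [Finsupp.add_apply, Finsupp.single_eq_same, Finsupp.single_eq_of_ne' rb_ne01]
      ring

def Emap : ((Fin 4 → ℤ) × ℤ) ≃ₗ[ℤ] (Q1 →₀ ℤ) × (Q2 →₀ ℤ) :=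
  LinearEquiv.ofLinear (TL ∘ₗ DL ∘ₗ e1L) (e1R ∘ₗ CL ∘ₗ TR)
    (LinearMap.ext fun p => by
      simp only [LinearMap.coe_comp, Function.comp_apply, LinearMap.id_coe, id_eq,
        e1L_e1R, DL_CL, TL_TR])
    (LinearMap.ext fun w => by
      simp only [LinearMap.coe_comp, Function.comp_apply, LinearMap.id_coe, id_eq,
        TR_TL, CL_DL, e1R_e1L])

lemma Emap_apply (p : (Fin 4 → ℤ) × ℤ) : Emap p = TL (DL (e1L p)) := rfl

lemma TL_cons (a b c d e : ℤ) :
    TL ![a, b, c, d, e] = (Finsupp.single (qb 0) a + Finsupp.single (qb 1) b + Finsupp.single (qb 2) c,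
      Finsupp.single (rb 0) d + Finsupp.single (rb 1) e) := rfl


lemma equivariant_of_gens {M N : GLat G3} (f : M.carrier →ₗ[ℤ] N.carrier)
    (h1 : ∀ m, f (M.ρ sg3 m) = N.ρ sg3 (f m))
    (h2 : ∀ m, f (M.ρ tu3 m) = N.ρ tu3 (f m)) :
    ∀ (g : G3) (m : M.carrier), f (M.ρ g m) = N.ρ g (f m) := by
  have key : ∀ g ∈ Subgroup.closure ({sg3, tu3} : Set G3),
      ∀ m, f (M.ρ g m) = N.ρ g (f m) := by
    intro g hg
    induction hg using Subgroup.closure_induction with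
    | mem x hx =>
      simp only [Set.mem_insert_iff, Set.mem_singleton_iff] at hx
      rcases hx with rfl | rfl
      · exact h1
      · exact h2
    | one => intro m; simp
    | mul x y hx hy ihx ihy =>
      intro m
      rw [map_mul, map_mul, Module.End.mul_apply, Module.End.mul_apply, ihx, ihy]
    | inv x hx ih =>
      intro m
      have hN : ∀ n, N.ρ x⁻¹ (N.ρ x n) = n := fun n => by
        rw [← Module.End.mul_apply, ← map_mul, inv_mul_cancel, map_one, Module.End.one_apply]
      have hM : M.ρ x (M.ρ x⁻¹ m) = m := by
        rw [← Module.End.mul_apply, ← map_mul, mul_inv_cancel, map_one, Module.End.one_apply]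
      calc f (M.ρ x⁻¹ m) = N.ρ x⁻¹ (N.ρ x (f (M.ρ x⁻¹ m))) := (hN _).symm
        _ = N.ρ x⁻¹ (f (M.ρ x (M.ρ x⁻¹ m))) := by rw [ih]
        _ = N.ρ x⁻¹ (f m) := by rw [hM]
  intro g
  exact key g (by rw [closure_eq_top]; trivial)

lemma TL_apply (w : Fin 5 → ℤ) :
    TL w = (Finsupp.single (qb 0) (w 0) + Finsupp.single (qb 1) (w 1) + Finsupp.single (qb 2) (w 2),
      Finsupp.single (rb 0) (w 3) + Finsupp.single (rb 1) (w 4)) := rfl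

lemma tar_rho (g : G3) (x : Q1 →₀ ℤ) (y : Q2 →₀ ℤ) :
    (((ofMulActionGLat G3 Q1).sum (ofMulActionGLat G3 Q2)).ρ g) (x, y)
      = (Finsupp.lmapDomain ℤ ℤ (g • ·) x, Finsupp.lmapDomain ℤ ℤ (g • ·) y) := rfl

lemma dom_rho (ρ : Representation ℤ G3 (Fin 4 → ℤ)) (g : G3) (v : Fin 4 → ℤ) (t : ℤ) :
    (((ofRep (Fin 4 → ℤ) ρ).sum (trivialGLat G3)).ρ g) (((v, t) : (Fin 4 → ℤ) × ℤ))
      = (((ρ g v, t) : (Fin 4 → ℤ) × ℤ)) := rfl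

lemma tar_sigma (w : Fin 5 → ℤ) :
    (((ofMulActionGLat G3 Q1).sum (ofMulActionGLat G3 Q2)).ρ sg3) (TL w)
      = TL ![w 2, w 0, w 1, w 3, w 4] := by
  rw [TL_apply w, TL_cons]; refine (tar_rho _ _ _).trans ?_
  simp only [map_add, Finsupp.lmapDomain_apply, Finsupp.mapDomain_add, Finsupp.mapDomain_single, smul_q0s, smul_q1s, smul_q2s,
    smul_r0s, smul_r1s]
  refine Prod.ext ?_ ?_ <;> abel

lemma tar_tau (w : Fin 5 → ℤ) :
    (((ofMulActionGLat G3 Q1).sum (ofMulActionGLat G3 Q2)).ρ tu3) (TL w)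
      = TL ![w 0, w 2, w 1, w 4, w 3] := by
  rw [TL_apply w, TL_cons]; refine (tar_rho _ _ _).trans ?_
  simp only [map_add, Finsupp.lmapDomain_apply, Finsupp.mapDomain_add, Finsupp.mapDomain_single, smul_q0t, smul_q1t, smul_q2t,
    smul_r0t, smul_r1t]
  refine Prod.ext ?_ ?_ <;> abel

lemma bDom_inl (i : Fin 4) :
    ((Pi.basisFun ℤ (Fin 4)).prod (Basis.singleton Unit ℤ)) (Sum.inl i)
      = (Pi.single i 1, (0:ℤ)) := by
  refine Prod.ext ?_ ?_
  · rw [Basis.prod_apply_inl_fst, Pi.basisFun_apply]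
  · exact Basis.prod_apply_inl_snd _ _ _

lemma bDom_inr (u : Unit) :
    ((Pi.basisFun ℤ (Fin 4)).prod (Basis.singleton Unit ℤ)) (Sum.inr u)
      = ((0 : Fin 4 → ℤ), (1:ℤ)) := by
  refine Prod.ext ?_ ?_
  · exact Basis.prod_apply_inr_fst _ _ _
  · rw [Basis.prod_apply_inr_snd, Basis.singleton_apply]

lemma gen_sigma (ρ : Representation ℤ G3 (Fin 4 → ℤ))
    (hσ : ρ sg3 = Matrix.toLin' Amat) :
    ∀ m, Emap ((((ofRep (Fin 4 → ℤ) ρ).sum (trivialGLat G3)).ρ sg3) m)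
      = (((ofMulActionGLat G3 Q1).sum (ofMulActionGLat G3 Q2)).ρ sg3) (Emap m) := by
  have h : (Emap.toLinearMap ∘ₗ (((ofRep (Fin 4 → ℤ) ρ).sum (trivialGLat G3)).ρ sg3))
      = ((((ofMulActionGLat G3 Q1).sum (ofMulActionGLat G3 Q2)).ρ sg3) ∘ₗ Emap.toLinearMap) := by
    apply Basis.ext ((Pi.basisFun ℤ (Fin 4)).prod (Basis.singleton Unit ℤ))
    rintro (i | u)
    · show Emap ((((ofRep (Fin 4 → ℤ) ρ).sum (trivialGLat G3)).ρ sg3) (((Pi.basisFun ℤ (Fin 4)).prod (Basis.singleton Unit ℤ)) (Sum.inl i)))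
          = (((ofMulActionGLat G3 Q1).sum (ofMulActionGLat G3 Q2)).ρ sg3) (Emap (((Pi.basisFun ℤ (Fin 4)).prod (Basis.singleton Unit ℤ)) (Sum.inl i)))
      rw [bDom_inl]
      show Emap ((ρ sg3 (Pi.single i 1), (0:ℤ)) : (Fin 4 → ℤ) × ℤ)
          = (((ofMulActionGLat G3 Q1).sum (ofMulActionGLat G3 Q2)).ρ sg3)
              (Emap ((Pi.single i 1, (0:ℤ)) : (Fin 4 → ℤ) × ℤ))
      rw [hσ, Emap_apply, Emap_apply, tar_sigma]
      fin_cases i <;> exact congrArg TL (by decide)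
    · show Emap ((((ofRep (Fin 4 → ℤ) ρ).sum (trivialGLat G3)).ρ sg3) (((Pi.basisFun ℤ (Fin 4)).prod (Basis.singleton Unit ℤ)) (Sum.inr u)))
          = (((ofMulActionGLat G3 Q1).sum (ofMulActionGLat G3 Q2)).ρ sg3) (Emap (((Pi.basisFun ℤ (Fin 4)).prod (Basis.singleton Unit ℤ)) (Sum.inr u)))
      rw [bDom_inr]
      show Emap ((ρ sg3 0, (1:ℤ)) : (Fin 4 → ℤ) × ℤ)
          = (((ofMulActionGLat G3 Q1).sum (ofMulActionGLat G3 Q2)).ρ sg3)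
              (Emap (((0 : Fin 4 → ℤ), (1:ℤ)) : (Fin 4 → ℤ) × ℤ))
      rw [hσ, Emap_apply, Emap_apply, tar_sigma]
      exact congrArg TL (by decide)
  intro m
  exact DFunLike.congr_fun h m

lemma gen_tau (ρ : Representation ℤ G3 (Fin 4 → ℤ))
    (hτ : ρ tu3 = Matrix.toLin' Bmat) :
    ∀ m, Emap ((((ofRep (Fin 4 → ℤ) ρ).sum (trivialGLat G3)).ρ tu3) m)
      = (((ofMulActionGLat G3 Q1).sum (ofMulActionGLat G3 Q2)).ρ tu3) (Emap m) := by
  have h : (Emap.toLinearMap ∘ₗ (((ofRep (Fin 4 → ℤ) ρ).sum (trivialGLat G3)).ρ tu3))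
      = ((((ofMulActionGLat G3 Q1).sum (ofMulActionGLat G3 Q2)).ρ tu3) ∘ₗ Emap.toLinearMap) := by
    apply Basis.ext ((Pi.basisFun ℤ (Fin 4)).prod (Basis.singleton Unit ℤ))
    rintro (i | u)
    · show Emap ((((ofRep (Fin 4 → ℤ) ρ).sum (trivialGLat G3)).ρ tu3) (((Pi.basisFun ℤ (Fin 4)).prod (Basis.singleton Unit ℤ)) (Sum.inl i)))
          = (((ofMulActionGLat G3 Q1).sum (ofMulActionGLat G3 Q2)).ρ tu3) (Emap (((Pi.basisFun ℤ (Fin 4)).prod (Basis.singleton Unit ℤ)) (Sum.inl i)))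
      rw [bDom_inl]
      show Emap ((ρ tu3 (Pi.single i 1), (0:ℤ)) : (Fin 4 → ℤ) × ℤ)
          = (((ofMulActionGLat G3 Q1).sum (ofMulActionGLat G3 Q2)).ρ tu3)
              (Emap ((Pi.single i 1, (0:ℤ)) : (Fin 4 → ℤ) × ℤ))
      rw [hτ, Emap_apply, Emap_apply, tar_tau]
      fin_cases i <;> exact congrArg TL (by decide)
    · show Emap ((((ofRep (Fin 4 → ℤ) ρ).sum (trivialGLat G3)).ρ tu3) (((Pi.basisFun ℤ (Fin 4)).prod (Basis.singleton Unit ℤ)) (Sum.inr u)))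
          = (((ofMulActionGLat G3 Q1).sum (ofMulActionGLat G3 Q2)).ρ tu3) (Emap (((Pi.basisFun ℤ (Fin 4)).prod (Basis.singleton Unit ℤ)) (Sum.inr u)))
      rw [bDom_inr]
      show Emap ((ρ tu3 0, (1:ℤ)) : (Fin 4 → ℤ) × ℤ)
          = (((ofMulActionGLat G3 Q1).sum (ofMulActionGLat G3 Q2)).ρ tu3)
              (Emap (((0 : Fin 4 → ℤ), (1:ℤ)) : (Fin 4 → ℤ) × ℤ))
      rw [hτ, Emap_apply, Emap_apply, tar_tau]
      exact congrArg TL (by decide)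
  intro m
  exact DFunLike.congr_fun h m

lemma main_iso (ρ : Representation ℤ G3 (Fin 4 → ℤ))
    (hσ : ρ sg3 = Matrix.toLin' Amat) (hτ : ρ tu3 = Matrix.toLin' Bmat) :
    ((ofRep (Fin 4 → ℤ) ρ).sum (trivialGLat G3)).Iso
      ((ofMulActionGLat G3 Q1).sum (ofMulActionGLat G3 Q2)) :=
  ⟨Emap, equivariant_of_gens (M := (ofRep (Fin 4 → ℤ) ρ).sum (trivialGLat G3))
    (N := (ofMulActionGLat G3 Q1).sum (ofMulActionGLat G3 Q2))
    Emap.toLinearMap (gen_sigma ρ hσ) (gen_tau ρ hτ)⟩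

lemma trace_toLin4 (M : Matrix (Fin 4) (Fin 4) ℤ) :
    LinearMap.trace ℤ (Fin 4 → ℤ) (Matrix.toLin' M) = Matrix.trace M := by
  rw [LinearMap.trace_eq_matrix_trace ℤ (Pi.basisFun ℤ (Fin 4)),
    LinearMap.toMatrix_eq_toMatrix', LinearMap.toMatrix'_toLin']

lemma trace_perm_count {V : Type} [AddCommGroup V] [Module ℤ V] {ι : Type}
    [Fintype ι] [DecidableEq ι] (b : Basis ι ℤ V) (f : V →ₗ[ℤ] V) (s : Equiv.Perm ι)
    (hb : ∀ i, f (b i) = b (s i)) :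
    LinearMap.trace ℤ V f = ((Finset.univ.filter fun i => s i = i).card : ℤ) := by
  rw [LinearMap.trace_eq_matrix_trace ℤ b, Matrix.trace]
  have hdiag : ∀ i : ι, Matrix.diag ((LinearMap.toMatrix b b) f) i
      = if s i = i then 1 else 0 := by
    intro i
    rw [Matrix.diag_apply, LinearMap.toMatrix_apply, hb, Basis.repr_self,
      Finsupp.single_apply]
  rw [Finset.sum_congr rfl fun i _ => hdiag i, Finset.sum_boole]

lemma not_perm (ρ : Representation ℤ G3 (Fin 4 → ℤ))
    (hσ : ρ sg3 = Matrix.toLin' Amat) (hτ : ρ tu3 = Matrix.toLin' Bmat) :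
    ¬ (ofRep (Fin 4 → ℤ) ρ).IsPermutation := by
  rintro ⟨ι, hι, b, π, hb⟩
  classical
  let b' : Basis ι ℤ (Fin 4 → ℤ) := b
  have hb' : ∀ (g : G3) (i : ι), ρ g (b' i) = b' (π g i) := hb
  have t1 : ((Finset.univ.filter fun i => π sg3 i = i).card : ℤ) = 1 := by
    rw [← trace_perm_count b' (ρ sg3) (π sg3) (hb' sg3), hσ, trace_toLin4]
    decide
  have t2 : ((Finset.univ.filter fun i => π tu3 i = i).card : ℤ) = 0 := by
    rw [← trace_perm_count b' (ρ tu3) (π tu3) (hb' tu3), hτ, trace_toLin4]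
    decide
  have c1 : (Finset.univ.filter fun i => π sg3 i = i).card = 1 := by exact_mod_cast t1
  have c2 : (Finset.univ.filter fun i => π tu3 i = i).card = 0 := by exact_mod_cast t2
  obtain ⟨i0, hi0⟩ := Finset.card_eq_one.mp c1
  have hfix : π sg3 i0 = i0 := by
    have : i0 ∈ Finset.univ.filter fun i => π sg3 i = i := by
      rw [hi0]; exact Finset.mem_singleton_self i0
    exact (Finset.mem_filter.mp this).2
  have hrel : sg3 * tu3 = tu3 * (sg3 * sg3) := by decide
  have hτfix : π sg3 (π tu3 i0) = π tu3 i0 := by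
    have e1 : π sg3 (π tu3 i0) = π (sg3 * tu3) i0 := by rw [map_mul]; rfl
    have e2 : π (tu3 * (sg3 * sg3)) i0 = π tu3 (π sg3 (π sg3 i0)) := by
      rw [map_mul, map_mul]; rfl
    rw [e1, hrel, e2, hfix, hfix]
  have hmem : π tu3 i0 ∈ Finset.univ.filter fun i => π sg3 i = i :=
    Finset.mem_filter.mpr ⟨Finset.mem_univ _, hτfix⟩
  rw [hi0, Finset.mem_singleton] at hmem
  have : i0 ∈ Finset.univ.filter fun i => π tu3 i = i :=
    Finset.mem_filter.mpr ⟨Finset.mem_univ _, hmem⟩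
  rw [Finset.card_eq_zero.mp c2] at this
  exact absurd this (Finset.notMem_empty i0)

lemma trivial_perm : (trivialGLat G).IsPermutation := by
  refine ⟨Unit, inferInstance, Basis.singleton Unit ℤ, 1, fun g i => rfl⟩

lemma ofMulAction_perm (S : Type) [MulAction G S] [Finite S] :
    (ofMulActionGLat G S).IsPermutation := by
  letI : Fintype S := Fintype.ofFinite S
  refine ⟨S, inferInstance, Finsupp.basisSingleOne, MulAction.toPermHom G S, fun g i => ?_⟩
  show Finsupp.lmapDomain ℤ ℤ (g • ·) (Finsupp.basisSingleOne i)
    = Finsupp.basisSingleOne (MulAction.toPermHom G S g i)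
  simp only [Finsupp.coe_basisSingleOne, Finsupp.lmapDomain_apply, Finsupp.mapDomain_single]
  rfl

lemma sum_perm {M N : GLat G} (hM : M.IsPermutation) (hN : N.IsPermutation) :
    (M.sum N).IsPermutation := by
  obtain ⟨ι, hι, b, πM, hbM⟩ := hM
  obtain ⟨κ, hκ, c, πN, hcN⟩ := hN
  letI := hι; letI := hκ
  refine ⟨ι ⊕ κ, inferInstance, b.prod c,
    (Equiv.Perm.sumCongrHom ι κ).comp (πM.prod πN), ?_⟩
  rintro g (i | j)
  · have h1 : (b.prod c) (Sum.inl i) = ((b i, 0) : M.carrier × N.carrier) :=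
      Prod.ext (Basis.prod_apply_inl_fst _ _ _) (Basis.prod_apply_inl_snd _ _ _)
    have h2 : (b.prod c) (Sum.inl (πM g i)) = ((b (πM g i), 0) : M.carrier × N.carrier) :=
      Prod.ext (Basis.prod_apply_inl_fst _ _ _) (Basis.prod_apply_inl_snd _ _ _)
    exact (congrArg ((M.sum N).ρ g) h1).trans
      ((show ((M.ρ g (b i), N.ρ g 0) : M.carrier × N.carrier) = (b (πM g i), 0) by
        rw [map_zero, hbM]).trans h2.symm)
  · have h1 : (b.prod c) (Sum.inr j) = ((0, c j) : M.carrier × N.carrier) :=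
      Prod.ext (Basis.prod_apply_inr_fst _ _ _) (Basis.prod_apply_inr_snd _ _ _)
    have h2 : (b.prod c) (Sum.inr (πN g j)) = ((0, c (πN g j)) : M.carrier × N.carrier) :=
      Prod.ext (Basis.prod_apply_inr_fst _ _ _) (Basis.prod_apply_inr_snd _ _ _)
    exact (congrArg ((M.sum N).ρ g) h1).trans
      ((show ((M.ρ g 0, N.ρ g (c j)) : M.carrier × N.carrier) = (0, c (πN g j)) by
        rw [map_zero, hcN]).trans h2.symm)

end Aux

/-- The rank-4 `S₃`-lattice `M` of GAP code `(4,14,3,3)`, on which a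
three-cycle `σ` and a transposition `τ` act by the displayed integral matrices, is not a
permutation `S₃`-lattice, but `M ⊕ ℤ ≅ ℤ[S₃/⟨τ⟩] ⊕ ℤ[S₃/⟨σ⟩]`; in particular `M` is
stably permutation. -/
theorem gap_4_14_3_3_stably_permutation_not_permutation
    (ρ : Representation ℤ (Equiv.Perm (Fin 3)) (Fin 4 → ℤ))
    (hσ : ρ (finRotate 3) =
      Matrix.toLin' (!![1, 0, -1, 0; 0, 1, -1, 0; 0, 0, -1, -1; 0, 0, 1, 0] :
        Matrix (Fin 4) (Fin 4) ℤ))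
    (hτ : ρ (Equiv.swap 0 1) =
      Matrix.toLin' (!![0, 1, -1, 0; 1, 0, -1, 0; 0, 0, -1, 0; 0, 0, 1, 1] :
        Matrix (Fin 4) (Fin 4) ℤ)) :
    ¬ (ofRep (Fin 4 → ℤ) ρ).IsPermutation ∧
    ((ofRep (Fin 4 → ℤ) ρ).sum (trivialGLat (Equiv.Perm (Fin 3)))).Iso
      ((ofMulActionGLat (Equiv.Perm (Fin 3))
          (Equiv.Perm (Fin 3) ⧸ Subgroup.zpowers (Equiv.swap (0 : Fin 3) 1))).sum
        (ofMulActionGLat (Equiv.Perm (Fin 3))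
          (Equiv.Perm (Fin 3) ⧸ Subgroup.zpowers (finRotate 3)))) ∧
    (ofRep (Fin 4 → ℤ) ρ).IsStablyPermutation := by
  have hiso := main_iso ρ hσ hτ
  exact ⟨not_perm ρ hσ hτ, hiso,
    trivialGLat G3, (ofMulActionGLat G3 Q1).sum (ofMulActionGLat G3 Q2),
    trivial_perm, sum_perm (ofMulAction_perm Q1) (ofMulAction_perm Q2), hiso⟩
end Paper
end
end
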